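/- Assume p ≡ 3 (mod 4). For any even integer l with 0 ≤ l < p, we have g̃_l(n) ≤ p - n for all 1 ≤ n ≤ p; in particular g̃_l(p) = 0, and hence g_{(p-1)/2, l}(p) ∈ Z_(p). -/

import Mathlib

/-! Since `p ≡ 3 (mod 4)`, `(n/p)(-n/p) = -1`. Together with parity (`g̃_l(n) + n` stays odd
while `g̃_l(n) > 0`) this keeps `g̃_l(n)` in `[0, p - n]`: the bound can only be reached as
`g̃_l(n) = p - n`, from which the sequence must step down.

Write `k = (p - 1)/2` and `g = g_{k,l}`. Then `(n + 1) g(n + 1) = n g(n) + g(n)^k`, and while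
`n < p` the value `g(n)` is a `p`-adic integer with `n g(n) ≡ g̃_l(n) (mod p)`: by Euler's
criterion `g(n)^k ≡ (g̃_l(n)/n)^k ≡ (n/p)(g̃_l(n)/p)`, exactly the increment of `g̃_l`. At the
last step `p g(p) ≡ g̃_l(p) = 0 (mod p)`, so `g(p)` is still integral. -/

/-- The (k,l)-Göbel sequence with values in ℚ: g 1 = l and
    (n+1) * g (n+1) = g n * (n + g n ^ (k-1)). -/
def gobel (k : ℕ) (l : ℚ) : ℕ → ℚ
  | 0 => 0
  | 1 => l
  | (n+2) => gobel k l (n+1) * (((n:ℚ)+1) + (gobel k l (n+1)) ^ (k-1)) / ((n:ℚ)+2)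

/-- The auxiliary sequence g̃_l of Kobayashi–Seki. -/
def gtilde (p : ℕ) [Fact p.Prime] (l : ℕ) : ℕ → ℤ
  | 0 => (l : ℤ)
  | 1 => (l : ℤ)
  | (n+2) =>
    let g := gtilde p l (n+1)
    if 0 < g ∧ g < (p : ℤ) then g + legendreSym p ((n:ℤ)+1) * legendreSym p g else g

/-- A rational number belongs to the localization ℤ_(p). -/
def inZp (p : ℕ) (x : ℚ) : Prop := ¬ (p ∣ x.den)

/-- Congruence modulo p inside ℤ_(p). -/
def modCongZp (p : ℕ) (x y : ℚ) : Prop :=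
  ∃ z : ℚ, ¬ (p ∣ z.den) ∧ x - y = (p : ℚ) * z

open PadicInt

section Gtilde

variable {p : ℕ} [Fact p.Prime]

lemma gtilde_succ (l : ℕ) {n : ℕ} (hn : 1 ≤ n) :
    gtilde p l (n + 1) = if 0 < gtilde p l n ∧ gtilde p l n < p then
      gtilde p l n + legendreSym p n * legendreSym p (gtilde p l n) else gtilde p l n := by
  obtain ⟨m, rfl⟩ := Nat.exists_eq_add_of_le' hn
  simp only [gtilde]
  push_cast
  rfl

lemma gtilde_one (l : ℕ) : gtilde p l 1 = l := rfl

lemma intCast_ne_zero_of_pos_of_lt {a : ℤ} (h0 : 0 < a) (h1 : a < p) : (a : ZMod p) ≠ 0 := by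
  rw [Ne, ZMod.intCast_zmod_eq_zero_iff_dvd]
  exact fun h => absurd (Int.le_of_dvd h0 h) (by omega)

lemma legendreSym_mul_legendreSym_sub_self (hp4 : p % 4 = 3) {n : ℤ} (hn : (n : ZMod p) ≠ 0) :
    legendreSym p n * legendreSym p (p - n) = -1 := by
  have hsub : legendreSym p (p - n) = legendreSym p (-1 * n) := by
    simp only [legendreSym, Int.cast_sub, Int.cast_natCast, ZMod.natCast_self, Int.cast_mul]
    ring_nf
  rw [hsub, legendreSym.mul, legendreSym.at_neg_one (by omega), ZMod.χ₄_nat_three_mod_four hp4]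
  linear_combination -legendreSym.sq_one p hn

lemma gtilde_eq_zero_or_le (hp4 : p % 4 = 3) {l : ℕ} (hleven : Even l) (hl : l < p) {n : ℕ}
    (h1 : 1 ≤ n) (h2 : n ≤ p) :
    gtilde p l n = 0 ∨
      (0 < gtilde p l n ∧ gtilde p l n ≤ p - n ∧ Odd (gtilde p l n + n)) := by
  induction n, h1 using Nat.le_induction with
  | base =>
    obtain ⟨m, rfl⟩ := hleven
    rw [gtilde_one]
    simp only [Int.odd_iff]
    omega
  | succ n hn ih =>
    rw [gtilde_succ l hn]
    rcases ih (by omega) with h0 | ⟨hpos, hle, hodd⟩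
    · simp [h0]
    set a := gtilde p l n
    rw [if_pos ⟨hpos, by omega⟩]
    have hn0 : ((n : ℤ) : ZMod p) ≠ 0 := intCast_ne_zero_of_pos_of_lt (by omega) (by omega)
    have hsign : legendreSym p n * legendreSym p a = 1 ∨
        legendreSym p n * legendreSym p a = -1 := by
      rw [← legendreSym.mul]
      exact legendreSym.eq_one_or_neg_one p (by
        rw [Int.cast_mul]; exact mul_ne_zero hn0 (intCast_ne_zero_of_pos_of_lt hpos (by omega)))
    simp only [Int.odd_iff] at hodd ⊢
    by_cases hedge : a = p - n
    · rw [hedge, legendreSym_mul_legendreSym_sub_self hp4 hn0]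
      push_cast
      omega
    · push_cast
      omega

lemma gtilde_self (hp4 : p % 4 = 3) {l : ℕ} (hleven : Even l) (hl : l < p) :
    gtilde p l p = 0 := by
  rcases gtilde_eq_zero_or_le hp4 hleven hl (n := p) (by omega) le_rfl with h | h <;> omega

-- `(0/p) = 0` makes the recursion a single congruence, also once `g̃` has reached `0`.
lemma intCast_gtilde_succ {l n : ℕ} (hn : 1 ≤ n) (h0 : 0 ≤ gtilde p l n)
    (hp : gtilde p l n < p) :
    ((gtilde p l (n + 1) : ℤ) : ZMod p) =
      gtilde p l n + ((legendreSym p n * legendreSym p (gtilde p l n) : ℤ) : ZMod p) := by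
  rw [gtilde_succ l hn]
  rcases h0.eq_or_lt with h | h
  · simp [← h]
  · rw [if_pos ⟨h, hp⟩]
    push_cast
    rfl

end Gtilde

theorem ZMod.pow_div_two_eq_legendreSym_mul {p : ℕ} [Fact p.Prime] {n a : ℤ}
    (hn : (n : ZMod p) ≠ 0) {y : ZMod p} (hy : n * y = a) :
    y ^ (p / 2) = ((legendreSym p n * legendreSym p a : ℤ) : ZMod p) := by
  have hsq : (n : ZMod p) ^ (p / 2) * (n : ZMod p) ^ (p / 2) = 1 := by
    rw [← sq, ← legendreSym.eq_pow, ← Int.cast_pow, legendreSym.sq_one p hn, Int.cast_one]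
  rw [Int.cast_mul, legendreSym.eq_pow, legendreSym.eq_pow, ← hy, mul_pow,
    ← mul_assoc, hsq, one_mul]

lemma gobel_succ_mul (k : ℕ) (l : ℚ) {n : ℕ} (hn : 1 ≤ n) :
    ((n + 1 : ℕ) : ℚ) * gobel k l (n + 1) = gobel k l n * (n + gobel k l n ^ (k - 1)) := by
  obtain ⟨m, rfl⟩ := Nat.exists_eq_add_of_le' hn
  rw [gobel]
  push_cast
  field_simp
  ring

namespace Padic

variable {p : ℕ} [Fact p.Prime]

lemma norm_le_one_of_natCast_mul {m : ℕ} (hm : p.Coprime m) {q : ℚ_[p]}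
    (h : ‖(m : ℚ_[p]) * q‖ ≤ 1) : ‖q‖ ≤ 1 := by
  rwa [norm_mul, norm_natCast_eq_one_iff.2 hm, one_mul] at h

lemma norm_le_one_of_norm_p_mul_lt_one {q : ℚ_[p]} (h : ‖(p : ℚ_[p]) * q‖ < 1) :
    ‖q‖ ≤ 1 := by
  have hle := (norm_le_pow_iff_norm_lt_pow_add_one ((p : ℚ_[p]) * q) (-1)).2
    (by simpa using h)
  rw [norm_mul, norm_p, zpow_neg_one] at hle
  have hp : (0 : ℝ) < (p : ℝ)⁻¹ := by simp [(Fact.out : p.Prime).pos]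
  nlinarith

end Padic

lemma inZp_of_norm_le_one {p : ℕ} [Fact p.Prime] {q : ℚ} (h : ‖(q : ℚ_[p])‖ ≤ 1) :
    inZp p q :=
  ((Fact.out : p.Prime).coprime_iff_not_dvd).1
    (norm_natCast_eq_one_iff.1 ((isUnit_iff).1 (isUnit_den q h)))

section Gobel

variable {p : ℕ} [Fact p.Prime]

lemma natCast_mul_gobel_succ {k : ℕ} {l : ℚ} {n : ℕ} (hn : 1 ≤ n) {x : ℤ_[p]}
    (hx : (x : ℚ_[p]) = gobel k l n) :
    ((n + 1 : ℕ) : ℚ_[p]) * gobel k l (n + 1) =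
      (x * ((n : ℤ_[p]) + x ^ (k - 1)) : ℤ_[p]) := by
  rw [← Rat.cast_natCast, ← Rat.cast_mul, gobel_succ_mul k l hn]
  simp [hx]

lemma toZMod_gobel_step (hp4 : p % 4 = 3) {l : ℕ} (hleven : Even l) (hl : l < p) {n : ℕ}
    (h1 : 1 ≤ n) (h2 : n < p) {x : ℤ_[p]}
    (hx : toZMod ((n : ℤ_[p]) * x) = (gtilde p l n : ZMod p)) :
    toZMod (x * ((n : ℤ_[p]) + x ^ ((p - 1) / 2 - 1))) = (gtilde p l (n + 1) : ZMod p) := by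
  have hexpand : x * ((n : ℤ_[p]) + x ^ ((p - 1) / 2 - 1)) = n * x + x ^ (p / 2) := by
    rw [mul_add, ← pow_succ', show (p - 1) / 2 - 1 + 1 = p / 2 by omega, mul_comm]
  have hbound := gtilde_eq_zero_or_le hp4 hleven hl h1 h2.le
  have hn0 : ((n : ℤ) : ZMod p) ≠ 0 := intCast_ne_zero_of_pos_of_lt (by omega) (by omega)
  have hy : ((n : ℤ) : ZMod p) * toZMod x = gtilde p l n := by
    rw [← hx, map_mul, map_natCast, Int.cast_natCast]
  rw [hexpand, map_add, hx, map_pow, ZMod.pow_div_two_eq_legendreSym_mul hn0 hy,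
    intCast_gtilde_succ h1 (by omega) (by omega)]

lemma exists_padicInt_gobel (hp4 : p % 4 = 3) {l : ℕ} (hleven : Even l) (hl : l < p) {n : ℕ}
    (h1 : 1 ≤ n) (h2 : n < p) :
    ∃ x : ℤ_[p], (x : ℚ_[p]) = gobel ((p - 1) / 2) l n ∧
      toZMod ((n : ℤ_[p]) * x) = (gtilde p l n : ZMod p) := by
  induction n, h1 using Nat.le_induction with
  | base => exact ⟨l, by simp [gobel], by simp [gtilde_one]⟩
  | succ n hn ih =>
    obtain ⟨x, hxq, hx⟩ := ih (by omega)
    set w := x * ((n : ℤ_[p]) + x ^ ((p - 1) / 2 - 1))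
    have hw : ((n + 1 : ℕ) : ℚ_[p]) * gobel ((p - 1) / 2) l (n + 1) = w :=
      natCast_mul_gobel_succ hn hxq
    have hnorm : ‖(gobel ((p - 1) / 2) l (n + 1) : ℚ_[p])‖ ≤ 1 :=
      Padic.norm_le_one_of_natCast_mul
        ((Fact.out : p.Prime).coprime_iff_not_dvd.2 (Nat.not_dvd_of_pos_of_lt (by omega) h2))
        (hw ▸ w.norm_le_one)
    refine ⟨⟨_, hnorm⟩, rfl, ?_⟩
    rw [show ((n + 1 : ℕ) : ℤ_[p]) * ⟨_, hnorm⟩ = w from Subtype.ext hw]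
    exact toZMod_gobel_step hp4 hleven hl hn (by omega) hx

lemma inZp_gobel (hp4 : p % 4 = 3) {l : ℕ} (hleven : Even l) (hl : l < p) :
    inZp p (gobel ((p - 1) / 2) l p) := by
  obtain ⟨x, hxq, hx⟩ := exists_padicInt_gobel hp4 hleven hl (n := p - 1) (by omega) (by omega)
  set w := x * (((p - 1 : ℕ) : ℤ_[p]) + x ^ ((p - 1) / 2 - 1))
  have hw : (p : ℚ_[p]) * gobel ((p - 1) / 2) l p = w := by
    simpa only [Nat.sub_add_cancel (by omega : 1 ≤ p)] using natCast_mul_gobel_succ (by omega) hxq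
  have hw0 : toZMod w = 0 := by
    rw [toZMod_gobel_step hp4 hleven hl (by omega) (by omega) hx,
      Nat.sub_add_cancel (by omega : 1 ≤ p), gtilde_self hp4 hleven hl, Int.cast_zero]
  have hwlt : ‖w‖ < 1 := by
    rw [← mem_nonunits, ← IsLocalRing.mem_maximalIdeal, ← ker_toZMod]
    exact hw0
  exact inZp_of_norm_le_one (Padic.norm_le_one_of_norm_p_mul_lt_one (hw ▸ hwlt))

end Gobel

theorem stmt3 (p : ℕ) [Fact p.Prime] (hp4 : p % 4 = 3) (l : ℕ) (hleven : Even l)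
    (hl : l < p) :
    (∀ n : ℕ, 1 ≤ n → n ≤ p → gtilde p l n ≤ (p : ℤ) - (n : ℤ)) ∧
    gtilde p l p = 0 ∧
    inZp p (gobel ((p - 1) / 2) (l : ℚ) p) := by
  refine ⟨fun n h1 h2 => ?_, gtilde_self hp4 hleven hl, inZp_gobel hp4 hleven hl⟩
  rcases gtilde_eq_zero_or_le hp4 hleven hl h1 h2 with h | h <;> omega
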